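/- Suppose each A_i is symmetric, the measurement operator satisfies (2r, δ)-RIP with 0 ≤ δ < 1, X* = U*·U*ᵀ for some U* ∈ ℝ^{n×r}, n ≥ 2, σ_w ≥ 0, the noise vector w ∈ ℝ^m satisfies |Σ_{i=1}^m w_i·⟨A_i, M⟩| ≤ 2·σ_w·√(log n)·(Σ_{i=1}^m ⟨A_i, M⟩²)^{1/2} for every M ∈ ℝ^{n×n} with rank(M) ≤ 2r, and y_i = ⟨A_i, X*⟩ + w_i for every i. Let U ∈ ℝ^{n×r} be a local minimum of f. Then for every r×r orthogonal matrix R, writing Δ := U − U*R and e_j for the standard basis of ℝ^r: ((1−δ)/(2(1+δ)))·‖U·Uᵀ − X*‖_F² ≤ Σ_{j=1}^r ‖U·e_j·e_jᵀ·Δᵀ‖_F² + (1/20)·‖U·Uᵀ − X*‖_F² + 10·log(n)·σ_w²/(m·(1+δ)). -/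

import Mathlib

/-!
At a local minimum `U` the objective has vanishing first and nonnegative second derivative along
every line `U + t • Z`. Take `Z = Δ` for the first-order condition and `Z = Δ eⱼ eⱼᵀ` for the
second-order ones, and sum the latter over `j`. Since `(U*R)(U*R)ᵀ = X*`, we have
`ΔΔᵀ = ΔUᵀ + UΔᵀ - E` with `E = UUᵀ - X*`, and the first-order condition removes the middle term:
`∑ᵢ ⟨Aᵢ, E⟩² ≤ 2 ∑ⱼ ∑ᵢ ⟨Aᵢ, U eⱼ eⱼᵀ Δᵀ⟩² + ∑ᵢ wᵢ ⟨Aᵢ, E⟩`.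
Every matrix here has rank at most `2r`, so RIP turns both sums of squares into Frobenius norms,
the noise term is at most `2σ√(log n) √(m(1+δ)) ‖E‖_F`, and AM-GM absorbs it.
-/

open Matrix MeasureTheory BigOperators

/-- Matrix inner product `⟨A, X⟩ = trace(Aᵀ X)`. -/
noncomputable def mip {n : ℕ} (A X : Matrix (Fin n) (Fin n) ℝ) : ℝ :=
  (Aᵀ * X).trace

/-- Frobenius norm of a real matrix. -/
noncomputable def frob {n₁ n₂ : ℕ} (M : Matrix (Fin n₁) (Fin n₂) ℝ) : ℝ :=
  Real.sqrt (∑ i, ∑ j, (M i j) ^ 2)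

/-- `(k, δ)`-restricted isometry property of the measurement operator `A`. -/
def RIP {n m : ℕ} (A : Fin m → Matrix (Fin n) (Fin n) ℝ) (k : ℕ) (δ : ℝ) : Prop :=
  ∀ X : Matrix (Fin n) (Fin n) ℝ, X.rank ≤ k →
    (1 - δ) * frob X ^ 2 ≤ (1 / (m : ℝ)) * ∑ i, mip (A i) X ^ 2 ∧
    (1 / (m : ℝ)) * ∑ i, mip (A i) X ^ 2 ≤ (1 + δ) * frob X ^ 2

/-- Objective `f(U) = ∑ i, (⟨A i, U Uᵀ⟩ - y i)²`. -/
noncomputable def fobj {n m r : ℕ} (A : Fin m → Matrix (Fin n) (Fin n) ℝ) (y : Fin m → ℝ)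
    (U : Matrix (Fin n) (Fin r) ℝ) : ℝ :=
  ∑ i, (mip (A i) (U * Uᵀ) - y i) ^ 2

lemma mip_add {n : ℕ} (A X Y : Matrix (Fin n) (Fin n) ℝ) : mip A (X + Y) = mip A X + mip A Y := by
  simp [mip, Matrix.mul_add]

lemma mip_sub {n : ℕ} (A X Y : Matrix (Fin n) (Fin n) ℝ) : mip A (X - Y) = mip A X - mip A Y := by
  simp [mip, Matrix.mul_sub]

lemma mip_smul {n : ℕ} (A : Matrix (Fin n) (Fin n) ℝ) (t : ℝ) (X : Matrix (Fin n) (Fin n) ℝ) :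
    mip A (t • X) = t * mip A X := by
  simp [mip]

lemma mip_sum {ι : Type*} {n : ℕ} (A : Matrix (Fin n) (Fin n) ℝ) (s : Finset ι)
    (X : ι → Matrix (Fin n) (Fin n) ℝ) : mip A (∑ j ∈ s, X j) = ∑ j ∈ s, mip A (X j) := by
  simp [mip, Matrix.mul_sum]

lemma mip_transpose_add_self {n : ℕ} {A : Matrix (Fin n) (Fin n) ℝ} (hA : Aᵀ = A)
    (X : Matrix (Fin n) (Fin n) ℝ) : mip A (Xᵀ + X) = 2 * mip A X := by
  have : mip A Xᵀ = mip A X := by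
    rw [mip, ← trace_transpose, transpose_mul, transpose_transpose, hA, trace_mul_comm, mip, hA]
  rw [mip_add, this, two_mul]

lemma frob_nonneg {n₁ n₂ : ℕ} (M : Matrix (Fin n₁) (Fin n₂) ℝ) : 0 ≤ frob M :=
  Real.sqrt_nonneg _

theorem IsLocalMin.eq_zero_and_nonneg_of_eq_quadratic {g h : ℝ → ℝ} {a b : ℝ}
    (hmin : IsLocalMin g 0) (hg : ∀ t, g t = a + b * t + t ^ 2 * h t)
    (hh : DifferentiableAt ℝ h 0) : b = 0 ∧ 0 ≤ h 0 := by
  have hderiv : HasDerivAt g b 0 := by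
    have := (((hasDerivAt_id (0 : ℝ)).const_mul b).const_add a).add
      ((hasDerivAt_pow 2 (0 : ℝ)).mul hh.hasDerivAt)
    rw [show g = (fun t => a + b * id t) + (fun t => t ^ 2) * h from funext fun t => by simp [hg]]
    exact this.congr_deriv (by simp)
  have hb : b = 0 := hmin.hasDerivAt_eq_zero hderiv
  refine ⟨hb, ge_of_tendsto
    (hh.continuousAt.tendsto.mono_left (nhdsWithin_le_nhds (s := {0}ᶜ))) ?_⟩
  filter_upwards [hmin.filter_mono nhdsWithin_le_nhds, self_mem_nhdsWithin] with t hgt ht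
  have ht2 : 0 < t ^ 2 := pow_two_pos_of_ne_zero ht
  simp only [hg, hb] at hgt
  nlinarith

section Optimality

variable {n m r : ℕ} (A : Fin m → Matrix (Fin n) (Fin n) ℝ) (y : Fin m → ℝ)
  (U Z : Matrix (Fin n) (Fin r) ℝ)

lemma add_smul_mul_transpose (t : ℝ) :
    (U + t • Z) * (U + t • Z)ᵀ = U * Uᵀ + t • (Z * Uᵀ + U * Zᵀ) + t ^ 2 • (Z * Zᵀ) := by
  simp only [transpose_add, transpose_smul, Matrix.add_mul, Matrix.mul_add, Matrix.smul_mul,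
    Matrix.mul_smul, smul_add, smul_smul, sq]
  abel

lemma fobj_add_smul (t : ℝ) :
    fobj A y (U + t • Z) = fobj A y U
      + (2 * ∑ i, (mip (A i) (U * Uᵀ) - y i) * mip (A i) (Z * Uᵀ + U * Zᵀ)) * t
      + t ^ 2 * ∑ i, ((mip (A i) (Z * Uᵀ + U * Zᵀ) + t * mip (A i) (Z * Zᵀ)) ^ 2
          + 2 * (mip (A i) (U * Uᵀ) - y i) * mip (A i) (Z * Zᵀ)) := by
  simp only [fobj, add_smul_mul_transpose, mip_add, mip_smul, Finset.mul_sum, Finset.sum_mul,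
    ← Finset.sum_add_distrib]
  exact Finset.sum_congr rfl fun i _ => by ring

theorem IsLocalMin.fobj_optimality (hU : IsLocalMin (fobj A y) U) :
    ∑ i, (mip (A i) (U * Uᵀ) - y i) * mip (A i) (Z * Uᵀ + U * Zᵀ) = 0 ∧
    0 ≤ ∑ i, (mip (A i) (Z * Uᵀ + U * Zᵀ) ^ 2
      + 2 * (mip (A i) (U * Uᵀ) - y i) * mip (A i) (Z * Zᵀ)) := by
  have hline : IsLocalMin (fun t : ℝ => fobj A y (U + t • Z)) 0 :=
    IsLocalMin.comp_continuous (f := fobj A y) (g := fun t : ℝ => U + t • Z) (b := 0)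
      (by simpa using hU) (by fun_prop)
  obtain ⟨hfirst, hsecond⟩ :=
    hline.eq_zero_and_nonneg_of_eq_quadratic (fobj_add_smul A y U Z) (by fun_prop)
  exact ⟨by linarith, by simpa using hsecond⟩

end Optimality

section SecondOrder

variable {n m r : ℕ} {A : Fin m → Matrix (Fin n) (Fin n) ℝ} {y : Fin m → ℝ}
  {U : Matrix (Fin n) (Fin r) ℝ}

theorem IsLocalMin.fobj_second_order_column (hsym : ∀ i, (A i)ᵀ = A i)
    (hU : IsLocalMin (fobj A y) U) (Δ : Matrix (Fin n) (Fin r) ℝ) (j : Fin r) :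
    0 ≤ 4 * ∑ i, mip (A i) (U * Matrix.single j j (1 : ℝ) * Δᵀ) ^ 2
      + 2 * ∑ i, (mip (A i) (U * Uᵀ) - y i)
          * mip (A i) (Δ * Matrix.single j j (1 : ℝ) * Δᵀ) := by
  set S := Matrix.single j j (1 : ℝ) with hSdef
  have hS : Sᵀ = S := transpose_single j j 1
  have hZU : Δ * S * Uᵀ + U * (Δ * S)ᵀ = (U * S * Δᵀ)ᵀ + U * S * Δᵀ := by
    simp only [transpose_mul, transpose_transpose, hS, Matrix.mul_assoc]
  have hZZ : Δ * S * (Δ * S)ᵀ = Δ * S * Δᵀ := by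
    rw [transpose_mul, hS, ← Matrix.mul_assoc, Matrix.mul_assoc Δ, hSdef, single_mul_single_same,
      mul_one]
  have := (hU.fobj_optimality A y U (Δ * S)).2
  simp only [hZU, hZZ, mip_transpose_add_self (hsym _)] at this
  rw [Finset.mul_sum, Finset.mul_sum, ← Finset.sum_add_distrib]
  exact this.trans_eq (Finset.sum_congr rfl fun i _ => by ring)

theorem IsLocalMin.fobj_second_order_sum_columns (hsym : ∀ i, (A i)ᵀ = A i)
    (hU : IsLocalMin (fobj A y) U) (Δ : Matrix (Fin n) (Fin r) ℝ) :
    0 ≤ 4 * ∑ j : Fin r, ∑ i, mip (A i) (U * Matrix.single j j (1 : ℝ) * Δᵀ) ^ 2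
      + 2 * ∑ i, (mip (A i) (U * Uᵀ) - y i) * mip (A i) (Δ * Δᵀ) := by
  have hcols : Δ * Δᵀ = ∑ j : Fin r, Δ * Matrix.single j j (1 : ℝ) * Δᵀ := by
    rw [← Matrix.sum_mul, ← Matrix.mul_sum, sum_single_one, Matrix.mul_one]
  have := Finset.sum_nonneg fun j (_ : j ∈ Finset.univ) =>
    hU.fobj_second_order_column (y := y) hsym Δ j
  simp only [hcols, mip_sum, Finset.mul_sum, Finset.sum_add_distrib] at this ⊢
  rwa [Finset.sum_comm (γ := Fin m)]

theorem IsLocalMin.sum_mip_sq_le {w : Fin m → ℝ} (hsym : ∀ i, (A i)ᵀ = A i)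
    (V : Matrix (Fin n) (Fin r) ℝ) (hy : ∀ i, y i = mip (A i) (V * Vᵀ) + w i)
    (hU : IsLocalMin (fobj A y) U) :
    ∑ i, mip (A i) (U * Uᵀ - V * Vᵀ) ^ 2 ≤
      2 * ∑ j : Fin r, ∑ i, mip (A i) (U * Matrix.single j j (1 : ℝ) * (U - V)ᵀ) ^ 2
        + ∑ i, w i * mip (A i) (U * Uᵀ - V * Vᵀ) := by
  set E := U * Uᵀ - V * Vᵀ with hE
  have hfirst := (hU.fobj_optimality A y U (U - V)).1
  have hsecond := hU.fobj_second_order_sum_columns hsym (U - V)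
  have hΔ : (U - V) * (U - V)ᵀ = ((U - V) * Uᵀ + U * (U - V)ᵀ) - E := by
    simp only [hE, transpose_sub, Matrix.sub_mul, Matrix.mul_sub]
    abel
  have hres : ∀ i, mip (A i) (U * Uᵀ) - y i = mip (A i) E - w i := by
    intro i
    rw [hy, hE, mip_sub]
    ring
  simp only [hΔ, mip_sub, mul_sub, Finset.sum_sub_distrib, hfirst] at hsecond
  simp only [hres, sub_mul, ← sq, Finset.sum_sub_distrib] at hsecond
  linarith

end SecondOrder

theorem Matrix.rank_sub_le {m n K : Type*} [Fintype n] [Field K] (A B : Matrix m n K) :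
    (A - B).rank ≤ A.rank + B.rank := by
  have hneg : (-B).mulVecLin = -B.mulVecLin := LinearMap.ext fun _ => neg_mulVec _ _
  calc (A - B).rank = Module.finrank K (LinearMap.range (A.mulVecLin + (-B).mulVecLin)) := by
        rw [sub_eq_add_neg, ← mulVecLin_add]; rfl
    _ ≤ Module.finrank K
          (LinearMap.range A.mulVecLin ⊔ LinearMap.range (-B).mulVecLin : Submodule K (m → K)) :=
        Submodule.finrank_mono (LinearMap.range_add_le _ _)
    _ ≤ A.rank + B.rank := by
        rw [hneg, LinearMap.range_neg]
        exact Submodule.finrank_add_le_finrank_add_finrank _ _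

lemma rank_mul_transpose_le {K : Type*} [Field K] {n r : ℕ} (U V : Matrix (Fin n) (Fin r) K) :
    (U * Vᵀ).rank ≤ r :=
  (rank_mul_le_left U Vᵀ).trans (rank_le_width U)

lemma rank_mul_transpose_sub_le {K : Type*} [Field K] {n r : ℕ} (U V : Matrix (Fin n) (Fin r) K) :
    (U * Uᵀ - V * Vᵀ).rank ≤ 2 * r :=
  calc (U * Uᵀ - V * Vᵀ).rank ≤ r + r :=
        (Matrix.rank_sub_le _ _).trans
          (add_le_add (rank_mul_transpose_le U U) (rank_mul_transpose_le V V))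
    _ = 2 * r := (two_mul r).symm

namespace RIP

variable {n m k : ℕ} {A : Fin m → Matrix (Fin n) (Fin n) ℝ} {δ : ℝ} {X : Matrix (Fin n) (Fin n) ℝ}

theorem lower_bound (h : RIP A k δ) (hX : X.rank ≤ k) :
    m * (1 - δ) * frob X ^ 2 ≤ ∑ i, mip (A i) X ^ 2 := by
  rcases Nat.eq_zero_or_pos m with rfl | hm
  · simp
  calc m * (1 - δ) * frob X ^ 2 = m * ((1 - δ) * frob X ^ 2) := by ring
    _ ≤ m * (1 / m * ∑ i, mip (A i) X ^ 2) := mul_le_mul_of_nonneg_left (h X hX).1 m.cast_nonneg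
    _ = ∑ i, mip (A i) X ^ 2 := by field_simp

theorem upper_bound (h : RIP A k δ) (hX : X.rank ≤ k) :
    ∑ i, mip (A i) X ^ 2 ≤ m * (1 + δ) * frob X ^ 2 := by
  rcases Nat.eq_zero_or_pos m with rfl | hm
  · simp
  calc ∑ i, mip (A i) X ^ 2 = m * (1 / m * ∑ i, mip (A i) X ^ 2) := by field_simp
    _ ≤ m * ((1 + δ) * frob X ^ 2) := mul_le_mul_of_nonneg_left (h X hX).2 m.cast_nonneg
    _ = m * (1 + δ) * frob X ^ 2 := by ring

theorem sum_mul_mip_le (h : RIP A k δ) (hX : X.rank ≤ k) {w : Fin m → ℝ} {c : ℝ} (hc : 0 ≤ c)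
    (hw : |∑ i, w i * mip (A i) X| ≤ c * √(∑ i, mip (A i) X ^ 2)) :
    ∑ i, w i * mip (A i) X ≤ c * √(m * (1 + δ)) * frob X := by
  have hsqrt : √(∑ i, mip (A i) X ^ 2) ≤ √(m * (1 + δ)) * frob X :=
    calc √(∑ i, mip (A i) X ^ 2) ≤ √(m * (1 + δ) * frob X ^ 2) :=
          Real.sqrt_le_sqrt (h.upper_bound hX)
      _ = √(m * (1 + δ)) * frob X := by
          rw [Real.sqrt_mul' _ (sq_nonneg _), Real.sqrt_sq (frob_nonneg X)]
  calc ∑ i, w i * mip (A i) X ≤ c * √(∑ i, mip (A i) X ^ 2) := (le_abs_self _).trans hw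
    _ ≤ c * √(m * (1 + δ)) * frob X := by
        rw [mul_assoc]
        exact mul_le_mul_of_nonneg_left hsqrt hc

end RIP

theorem absorb_noise_term {m δ a s L σ : ℝ} (hm : 0 < m) (hδ : 0 < 1 + δ) (hL : 0 ≤ L)
    (h : m * (1 - δ) * a ^ 2 ≤ 2 * (m * (1 + δ)) * s + 2 * σ * √L * √(m * (1 + δ)) * a) :
    (1 - δ) / (2 * (1 + δ)) * a ^ 2 ≤ s + 1 / 20 * a ^ 2 + 10 * L * σ ^ 2 / (m * (1 + δ)) := by
  set D := m * (1 + δ) with hD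
  have hDpos : 0 < D := mul_pos hm hδ
  have hamgm : 2 * σ * √L * √D * a ≤ D * a ^ 2 / 10 + 10 * σ ^ 2 * L := by
    nlinarith [sq_nonneg (√D * a - 10 * σ * √L), Real.sq_sqrt hDpos.le, Real.sq_sqrt hL]
  have hlhs : (1 - δ) / (2 * (1 + δ)) * a ^ 2 = m * (1 - δ) * a ^ 2 / (2 * D) := by
    field_simp
    ring
  have hrhs : s + 1 / 20 * a ^ 2 + 10 * L * σ ^ 2 / D
      = (2 * D * s + D * a ^ 2 / 10 + 20 * σ ^ 2 * L) / (2 * D) := by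
    field_simp
    ring
  rw [hlhs, hrhs]
  gcongr
  nlinarith [sq_nonneg σ]

theorem noisy_second_order_condition_general {n m r : ℕ} (hm : 0 < m)
    (A : Fin m → Matrix (Fin n) (Fin n) ℝ) (hsym : ∀ i, (A i)ᵀ = A i)
    (δ : ℝ) (hδ0 : 0 ≤ δ) (hRIP : RIP A (2 * r) δ)
    (Ustar : Matrix (Fin n) (Fin r) ℝ) (Xstar : Matrix (Fin n) (Fin n) ℝ)
    (hX : Xstar = Ustar * Ustarᵀ)
    (σw : ℝ) (hσw : 0 ≤ σw) (w : Fin m → ℝ)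
    (hw : ∀ M : Matrix (Fin n) (Fin n) ℝ, M.rank ≤ 2 * r →
      |∑ i, w i * mip (A i) M| ≤
        2 * σw * Real.sqrt (Real.log n) * Real.sqrt (∑ i, mip (A i) M ^ 2))
    (y : Fin m → ℝ) (hy : ∀ i, y i = mip (A i) Xstar + w i)
    (U : Matrix (Fin n) (Fin r) ℝ) (hU : IsLocalMin (fobj A y) U)
    (R : Matrix (Fin r) (Fin r) ℝ) (hR : Rᵀ * R = 1) :
    ((1 - δ) / (2 * (1 + δ))) * frob (U * Uᵀ - Xstar) ^ 2 ≤
      (∑ j : Fin r,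
        frob (U * Matrix.single j j (1 : ℝ) * (U - Ustar * R)ᵀ) ^ 2) +
      (1 / 20) * frob (U * Uᵀ - Xstar) ^ 2 +
      10 * Real.log n * σw ^ 2 / (m * (1 + δ)) := by
  have hXR : Xstar = (Ustar * R) * (Ustar * R)ᵀ := by
    rw [hX, transpose_mul, Matrix.mul_assoc, ← Matrix.mul_assoc R, mul_eq_one_comm.mp hR,
      Matrix.one_mul]
  subst hXR
  have hrank := rank_mul_transpose_sub_le U (Ustar * R)
  have hcore := hU.sum_mip_sq_le hsym (Ustar * R) hy
  set Δ := U - Ustar * R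
  have hcols : ∑ j : Fin r, ∑ i, mip (A i) (U * Matrix.single j j (1 : ℝ) * Δᵀ) ^ 2
      ≤ m * (1 + δ) * ∑ j : Fin r, frob (U * Matrix.single j j (1 : ℝ) * Δᵀ) ^ 2 := by
    rw [Finset.mul_sum]
    exact Finset.sum_le_sum fun j _ => hRIP.upper_bound
      ((rank_mul_transpose_le _ _).trans (Nat.le_mul_of_pos_left r two_pos))
  have hnoise := hRIP.sum_mul_mip_le hrank (by positivity) (hw _ hrank)
  refine absorb_noise_term (by exact_mod_cast hm) (by linarith) (Real.log_natCast_nonneg n) ?_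
  linarith [hRIP.lower_bound hrank]

/-- Noisy second-order optimality condition at a local minimum. -/
theorem noisy_second_order_condition {n m r : ℕ} (hn : 2 ≤ n) (hm : 0 < m) (hr : 0 < r)
    (A : Fin m → Matrix (Fin n) (Fin n) ℝ) (hsym : ∀ i, (A i)ᵀ = A i)
    (δ : ℝ) (hδ0 : 0 ≤ δ) (hδ1 : δ < 1) (hRIP : RIP A (2 * r) δ)
    (Ustar : Matrix (Fin n) (Fin r) ℝ) (Xstar : Matrix (Fin n) (Fin n) ℝ)
    (hX : Xstar = Ustar * Ustarᵀ)
    (σw : ℝ) (hσw : 0 ≤ σw) (w : Fin m → ℝ)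
    (hw : ∀ M : Matrix (Fin n) (Fin n) ℝ, M.rank ≤ 2 * r →
      |∑ i, w i * mip (A i) M| ≤
        2 * σw * Real.sqrt (Real.log n) * Real.sqrt (∑ i, mip (A i) M ^ 2))
    (y : Fin m → ℝ) (hy : ∀ i, y i = mip (A i) Xstar + w i)
    (U : Matrix (Fin n) (Fin r) ℝ) (hU : IsLocalMin (fobj A y) U)
    (R : Matrix (Fin r) (Fin r) ℝ) (hR : Rᵀ * R = 1) :
    ((1 - δ) / (2 * (1 + δ))) * frob (U * Uᵀ - Xstar) ^ 2 ≤
      (∑ j : Fin r,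
        frob (U * Matrix.single j j (1 : ℝ) * (U - Ustar * R)ᵀ) ^ 2) +
      (1 / 20) * frob (U * Uᵀ - Xstar) ^ 2 +
      10 * Real.log n * σw ^ 2 / (m * (1 + δ)) :=
  noisy_second_order_condition_general hm A hsym δ hδ0 hRIP Ustar Xstar hX σw hσw w hw y hy U hU R
    hR
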